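/- Let X be a set with the Ulam property, and let P(x,E) = P_ca(x,E) + P_pfa(x,E) be a combined finitely additive Markov chain on X with weights q₁, q₂ (q₁, q₂ ≥ 0, q₁ + q₂ = 1). Let μ be a countably additive probability measure on X, and define the image measure ν(E) = ∫_X P_ca(x,E) μ(dx) + ∫_X P_pfa(x,E) μ(dx) for E ⊆ X. Then ν is a nonnegative finitely additive measure with ν(X) = 1, the set function ν_ca(E) = ∫_X P_ca(x,E) μ(dx) is a countably additive measure with total mass ν_ca(X) = q₁, the set function ν_pfa(E) = ∫_X P_pfa(x,E) μ(dx) is a purely finitely additive nonnegative finitely additive measure with total mass ν_pfa(X) = q₂, and ν = ν_ca + ν_pfa is the (unique) Yosida–Hewitt decomposition of ν. In particular, the countably additive component of the one-step image of any countably additive probability measure has norm exactly q₁ and the purely finitely additive component has norm exactly q₂. -/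

import Mathlib

open MeasureTheory Set

/-- A finitely additive (signed) measure on all subsets of `X`. -/
def IsFA {X : Type*} (μ : Set X → ℝ) : Prop :=
  μ ∅ = 0 ∧ ∀ A B : Set X, Disjoint A B → μ (A ∪ B) = μ A + μ B

/-- A nonnegative finitely additive measure on all subsets of `X`. -/
def IsNNFA {X : Type*} (μ : Set X → ℝ) : Prop :=
  IsFA μ ∧ ∀ E : Set X, 0 ≤ μ E

/-- A (bounded, nonnegative) countably additive measure on all subsets of `X`:
a nonnegative finitely additive measure which is countably additive. -/
def IsCA {X : Type*} (μ : Set X → ℝ) : Prop :=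
  IsNNFA μ ∧ ∀ E : ℕ → Set X, Pairwise (Function.onFun Disjoint E) →
    HasSum (fun n => μ (E n)) (μ (⋃ n, E n))

/-- A purely finitely additive measure: every countably additive measure
dominated by it is identically zero. -/
def IsPFA {X : Type*} (μ : Set X → ℝ) : Prop :=
  IsNNFA μ ∧ ∀ ν : Set X → ℝ, IsCA ν → (∀ E : Set X, ν E ≤ μ E) → ν = 0

/-- `X` has the Ulam property: every countably additive measure on all subsets of `X`
vanishing on every singleton is identically zero. -/
def UlamProperty (X : Type*) : Prop :=
  ∀ ν : Set X → ℝ, IsCA ν → (∀ x : X, ν {x} = 0) → ν = 0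

lemma nnfa_mono {X : Type*} {μ : Set X → ℝ} (h : IsNNFA μ) {A B : Set X} (hAB : A ⊆ B) :
    μ A ≤ μ B := by
  have hd : Disjoint A (B \ A) := disjoint_sdiff_right
  have := h.1.2 A (B \ A) hd
  rw [Set.union_diff_cancel hAB] at this
  have := h.2 (B \ A)
  linarith

lemma pfa_singleton {X : Type*} {μ : Set X → ℝ} (h : IsPFA μ) (y : X) : μ {y} = 0 := by
  set lam : Set X → ℝ := fun E => μ (E ∩ {y}) with hlam
  have hCA : IsCA lam := by
    refine ⟨⟨⟨by simp [hlam, h.1.1.1], ?_⟩, fun E => h.1.2 _⟩, ?_⟩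
    · intro A B hAB
      simp only [hlam, Set.union_inter_distrib_right]
      exact h.1.1.2 _ _ (hAB.mono inter_subset_left inter_subset_left)
    · intro E hE
      by_cases hy : y ∈ ⋃ n, E n
      · obtain ⟨k, hk⟩ := Set.mem_iUnion.1 hy
        have hzero : ∀ n ≠ k, lam (E n) = 0 := by
          intro n hn
          have : E n ∩ {y} = ∅ := by
            apply Set.eq_empty_iff_forall_notMem.2
            rintro z ⟨hz1, hz2⟩
            rw [Set.mem_singleton_iff] at hz2; subst hz2
            exact (hE hn).le_bot ⟨hz1, hk⟩
          simp [hlam, this, h.1.1.1]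
        have h1 : lam (⋃ n, E n) = lam (E k) := by
          have e1 : (⋃ n, E n) ∩ {y} = {y} :=
            Set.inter_eq_self_of_subset_right (Set.singleton_subset_iff.2 hy)
          have e2 : E k ∩ {y} = {y} :=
            Set.inter_eq_self_of_subset_right (Set.singleton_subset_iff.2 hk)
          simp [hlam, e1, e2]
        rw [h1]
        exact hasSum_single k hzero
      · have hz : ∀ n, lam (E n) = 0 := by
          intro n
          have : E n ∩ {y} = ∅ := by
            apply Set.eq_empty_iff_forall_notMem.2
            rintro z ⟨hz1, hz2⟩
            rw [Set.mem_singleton_iff] at hz2; subst hz2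
            exact hy (Set.mem_iUnion.2 ⟨n, hz1⟩)
          simp [hlam, this, h.1.1.1]
        have hu : lam (⋃ n, E n) = 0 := by
          have : (⋃ n, E n) ∩ {y} = ∅ := by
            apply Set.eq_empty_iff_forall_notMem.2
            rintro z ⟨hz1, hz2⟩
            rw [Set.mem_singleton_iff] at hz2; subst hz2
            exact hy hz1
          simp [hlam, this, h.1.1.1]
        rw [hu]
        exact (hasSum_zero.congr_fun fun n => (hz n))
  have hle : ∀ E : Set X, lam E ≤ μ E := fun E => nnfa_mono h.1 inter_subset_left
  have := h.2 lam hCA hle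
  have h0 : lam {y} = 0 := by rw [this]; rfl
  simpa [hlam, Set.inter_self] using h0

lemma nnfa_finset_sum {X : Type*} {μ : Set X → ℝ} (h : IsNNFA μ) (u : Finset X) :
    μ (↑u : Set X) = ∑ y ∈ u, μ {y} := by
  classical
  induction u using Finset.induction_on with
  | empty => simpa using h.1.1
  | @insert a s ha ih =>
    rw [Finset.coe_insert, Set.insert_eq, h.1.2 _ _ (by simpa using ha), Finset.sum_insert ha, ih]

lemma ca_summable_singleton {X : Type*} {α : Set X → ℝ} (hα : IsCA α) :
    Summable (fun y : X => α {y}) := by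
  apply summable_of_sum_le (c := α Set.univ) (fun y => hα.1.2 {y})
  intro u
  rw [← nnfa_finset_sum hα.1 u]
  exact nnfa_mono hα.1 (Set.subset_univ _)

lemma ca_eq_of_singletons {X : Type*} (hU : UlamProperty X) {α β : Set X → ℝ}
    (hα : IsCA α) (hβ : IsCA β) (h : ∀ y : X, α {y} = β {y}) : α = β := by
  classical
  set D := Function.support (fun y : X => α {y}) with hD
  have hDc : D.Countable := (ca_summable_singleton hα).countable_support
  -- the part outside D vanishes for any CA measure agreeing with α on singletons
  have hdiff : ∀ γ : Set X → ℝ, IsCA γ → (∀ y : X, γ {y} = α {y}) →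
      ∀ E : Set X, γ (E \ D) = 0 := by
    intro γ hγ hs E
    have hγD : IsCA (fun F : Set X => γ (F \ D)) := by
      refine ⟨⟨⟨by simpa using hγ.1.1.1, ?_⟩, fun F => hγ.1.2 _⟩, ?_⟩
      · intro A B hAB
        show γ ((A ∪ B) \ D) = γ (A \ D) + γ (B \ D)
        rw [Set.union_diff_distrib]
        exact hγ.1.1.2 _ _ (hAB.mono diff_subset diff_subset)
      · intro E hE
        show HasSum (fun n => γ (E n \ D)) (γ ((⋃ n, E n) \ D))
        have heq : (⋃ n, E n) \ D = ⋃ n, E n \ D := Set.iUnion_diff D E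
        rw [heq]
        exact hγ.2 _ (fun m n hmn => (hE hmn).mono diff_subset diff_subset)
    have hzero : ∀ y : X, γ ({y} \ D) = 0 := by
      intro y
      by_cases hy : y ∈ D
      · have : ({y} : Set X) \ D = ∅ := by
          rw [Set.diff_eq_empty]; exact Set.singleton_subset_iff.2 hy
        rw [this]; exact hγ.1.1.1
      · have : ({y} : Set X) \ D = {y} := by
          apply Set.Subset.antisymm diff_subset
          intro z hz
          rw [Set.mem_singleton_iff] at hz; subst hz
          exact ⟨rfl, hy⟩
        rw [this, hs y]
        simpa [hD, Function.mem_support, not_not] using hy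
    exact congrFun (hU _ hγD hzero) E
  -- equality on countable subsets of D
  have hrange : ∀ E : Set X, α (E ∩ D) = β (E ∩ D) := by
    intro E
    have hc : (E ∩ D).Countable := hDc.mono inter_subset_right
    rcases (E ∩ D).eq_empty_or_nonempty with he | hne
    · rw [he, hα.1.1.1, hβ.1.1.1]
    · obtain ⟨f, hf⟩ := hc.exists_eq_range hne
      set F : ℕ → Set X := fun n => {f n} \ (f '' Set.Iio n) with hF
      have hdis : Pairwise (Function.onFun Disjoint F) := by
        have key : ∀ m n : ℕ, m < n → Disjoint (F m) (F n) := by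
          intro m n hmn
          rw [Set.disjoint_left]
          rintro x ⟨hx1, _⟩ ⟨hx3, hx4⟩
          rw [Set.mem_singleton_iff] at hx1 hx3
          exact hx4 ⟨m, hmn, hx1.symm⟩
        intro m n hmn
        rcases lt_or_gt_of_ne hmn with hlt | hgt
        · exact key m n hlt
        · exact (key n m hgt).symm
      have hun : (⋃ n, F n) = Set.range f := by
        apply Set.Subset.antisymm
        · refine Set.iUnion_subset fun n => ?_
          refine (diff_subset).trans ?_
          rw [Set.singleton_subset_iff]; exact ⟨n, rfl⟩
        · rintro x ⟨n, rfl⟩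
          have hex : ∃ m, f m = f n := ⟨n, rfl⟩
          let k := Nat.find hex
          refine Set.mem_iUnion.2 ⟨k, ?_⟩
          constructor
          · rw [Set.mem_singleton_iff]; exact (Nat.find_spec hex).symm
          · rintro ⟨m, hm, hfm⟩
            exact Nat.find_min hex (Set.mem_Iio.1 hm) hfm
      have hterm : ∀ n, α (F n) = β (F n) := by
        intro n
        by_cases hmem : f n ∈ f '' Set.Iio n
        · have : F n = ∅ := by
            rw [hF]; simp only
            rw [Set.diff_eq_empty]
            exact Set.singleton_subset_iff.2 hmem
          rw [this, hα.1.1.1, hβ.1.1.1]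
        · have : F n = {f n} := by
            apply Set.Subset.antisymm diff_subset
            intro z hz
            rw [Set.mem_singleton_iff] at hz; subst hz
            exact ⟨rfl, hmem⟩
          rw [this]; exact h (f n)
      have hA : HasSum (fun n => α (F n)) (α (⋃ n, F n)) := hα.2 F hdis
      have hB : HasSum (fun n => α (F n)) (β (⋃ n, F n)) :=
        (hβ.2 F hdis).congr_fun fun n => hterm n
      have := hA.unique hB
      rwa [hun, ← hf] at this
  funext E
  have hsplit : ∀ γ : Set X → ℝ, IsCA γ → γ E = γ (E ∩ D) + γ (E \ D) := by
    intro γ hγ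
    have hd : Disjoint (E ∩ D) (E \ D) := by
      rw [Set.disjoint_left]
      rintro x ⟨_, hx2⟩ ⟨_, hx4⟩
      exact hx4 hx2
    have := hγ.1.1.2 _ _ hd
    rw [Set.inter_union_diff] at this
    exact this
  rw [hsplit α hα, hsplit β hβ, hrange E, hdiff α hα (fun _ => rfl) E,
    hdiff β hβ (fun y => (h y).symm) E]

/-- on a set with the Ulam property, for a combined finitely additive
Markov chain with weights q₁, q₂ and a countably additive probability measure μ,
the image measure ν = A μ is a finitely additive probability measure whose
Yosida–Hewitt decomposition is exactly ν_ca(E) = ∫ P_ca(x,E) dμ (countably additive,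
of total mass q₁) plus ν_pfa(E) = ∫ P_pfa(x,E) dμ (purely finitely additive, of total
mass q₂), and this decomposition is unique. -/
theorem combined_chain_image_decomposition {X : Type*} (hU : UlamProperty X)
    (q1 q2 : ℝ) (hq1 : 0 ≤ q1) (hq2 : 0 ≤ q2) (hq : q1 + q2 = 1)
    (Pca Ppfa : X → Set X → ℝ)
    (hca : ∀ x : X, IsCA (Pca x) ∧ Pca x Set.univ = q1)
    (hpfa : ∀ x : X, IsPFA (Ppfa x) ∧ Ppfa x Set.univ = q2)
    (μ : @MeasureTheory.Measure X ⊤) (hprob : μ Set.univ = 1) :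
    (IsNNFA (fun E : Set X => (∫ x, Pca x E ∂μ) + ∫ x, Ppfa x E ∂μ) ∧
      (∫ x, Pca x (Set.univ : Set X) ∂μ) + (∫ x, Ppfa x (Set.univ : Set X) ∂μ) = 1) ∧
    (IsCA (fun E : Set X => ∫ x, Pca x E ∂μ) ∧
      (∫ x, Pca x (Set.univ : Set X) ∂μ) = q1) ∧
    (IsPFA (fun E : Set X => ∫ x, Ppfa x E ∂μ) ∧
      (∫ x, Ppfa x (Set.univ : Set X) ∂μ) = q2) ∧
    (∀ ρca ρpfa : Set X → ℝ, IsCA ρca → IsPFA ρpfa →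
      (∀ E : Set X, (∫ x, Pca x E ∂μ) + (∫ x, Ppfa x E ∂μ) = ρca E + ρpfa E) →
      ρca = (fun E : Set X => ∫ x, Pca x E ∂μ) ∧
      ρpfa = (fun E : Set X => ∫ x, Ppfa x E ∂μ)) := by
  classical
  haveI : IsProbabilityMeasure μ := ⟨hprob⟩
  letI : MeasurableSpace X := ⊤
  have measca : ∀ E : Set X, AEStronglyMeasurable (fun x => Pca x E) μ :=
    fun E => (measurable_from_top (f := fun x => Pca x E)).aestronglyMeasurable
  have measpfa : ∀ E : Set X, AEStronglyMeasurable (fun x => Ppfa x E) μ :=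
    fun E => (measurable_from_top (f := fun x => Ppfa x E)).aestronglyMeasurable
  have hcab : ∀ (x : X) (E : Set X), 0 ≤ Pca x E ∧ Pca x E ≤ q1 := fun x E =>
    ⟨(hca x).1.1.2 E, by
      rw [← (hca x).2]; exact nnfa_mono (hca x).1.1 (Set.subset_univ E)⟩
  have hpb : ∀ (x : X) (E : Set X), 0 ≤ Ppfa x E ∧ Ppfa x E ≤ q2 := fun x E =>
    ⟨(hpfa x).1.1.2 E, by
      rw [← (hpfa x).2]; exact nnfa_mono (hpfa x).1.1 (Set.subset_univ E)⟩
  have intca : ∀ E : Set X, Integrable (fun x => Pca x E) μ := fun E =>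
    (integrable_const q1).mono' (measca E) (Filter.Eventually.of_forall fun x => by
      rw [Real.norm_eq_abs, abs_of_nonneg (hcab x E).1]; exact (hcab x E).2)
  have intpfa : ∀ E : Set X, Integrable (fun x => Ppfa x E) μ := fun E =>
    (integrable_const q2).mono' (measpfa E) (Filter.Eventually.of_forall fun x => by
      rw [Real.norm_eq_abs, abs_of_nonneg (hpb x E).1]; exact (hpb x E).2)
  have hcaE : (∫ x, Pca x (∅ : Set X) ∂μ) = 0 := by
    rw [show (fun x => Pca x (∅ : Set X)) = fun _ => (0 : ℝ) from
      funext fun x => (hca x).1.1.1.1]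
    simp
  have hpfaE : (∫ x, Ppfa x (∅ : Set X) ∂μ) = 0 := by
    rw [show (fun x => Ppfa x (∅ : Set X)) = fun _ => (0 : ℝ) from
      funext fun x => (hpfa x).1.1.1.1]
    simp
  have hcaAdd : ∀ A B : Set X, Disjoint A B →
      (∫ x, Pca x (A ∪ B) ∂μ) = (∫ x, Pca x A ∂μ) + ∫ x, Pca x B ∂μ := by
    intro A B hAB
    rw [show (fun x => Pca x (A ∪ B)) = fun x => Pca x A + Pca x B from
      funext fun x => (hca x).1.1.1.2 A B hAB]
    exact integral_add (intca A) (intca B)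
  have hpfaAdd : ∀ A B : Set X, Disjoint A B →
      (∫ x, Ppfa x (A ∪ B) ∂μ) = (∫ x, Ppfa x A ∂μ) + ∫ x, Ppfa x B ∂μ := by
    intro A B hAB
    rw [show (fun x => Ppfa x (A ∪ B)) = fun x => Ppfa x A + Ppfa x B from
      funext fun x => (hpfa x).1.1.1.2 A B hAB]
    exact integral_add (intpfa A) (intpfa B)
  have mca : (∫ x, Pca x (Set.univ : Set X) ∂μ) = q1 := by
    rw [show (fun x => Pca x (Set.univ : Set X)) = fun _ => q1 from
      funext fun x => (hca x).2]
    simp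
  have mpfa : (∫ x, Ppfa x (Set.univ : Set X) ∂μ) = q2 := by
    rw [show (fun x => Ppfa x (Set.univ : Set X)) = fun _ => q2 from
      funext fun x => (hpfa x).2]
    simp
  have nuca_CA : IsCA (fun E : Set X => ∫ x, Pca x E ∂μ) := by
    refine ⟨⟨⟨hcaE, hcaAdd⟩, fun E => integral_nonneg fun x => (hcab x E).1⟩, ?_⟩
    intro E hE
    exact MeasureTheory.hasSum_integral_of_dominated_convergence
      (F := fun n x => Pca x (E n)) (f := fun x => Pca x (⋃ n, E n))
      (bound := fun n x => Pca x (E n)) (fun n => measca (E n))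
      (fun n => Filter.Eventually.of_forall fun x =>
        le_of_eq (by rw [Real.norm_eq_abs, abs_of_nonneg (hcab x (E n)).1]))
      (Filter.Eventually.of_forall fun x => ((hca x).1.2 E hE).summable)
      (by
        rw [show (fun x => ∑' n, Pca x (E n)) = fun x => Pca x (⋃ n, E n) from
          funext fun x => ((hca x).1.2 E hE).tsum_eq]
        exact intca _)
      (Filter.Eventually.of_forall fun x => (hca x).1.2 E hE)
  have hsing0 : ∀ y : X, (∫ x, Ppfa x ({y} : Set X) ∂μ) = 0 := by
    intro y
    rw [show (fun x => Ppfa x ({y} : Set X)) = fun _ => (0 : ℝ) from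
      funext fun x => pfa_singleton (hpfa x).1 y]
    simp
  have nupfa_PFA : IsPFA (fun E : Set X => ∫ x, Ppfa x E ∂μ) := by
    refine ⟨⟨⟨hpfaE, hpfaAdd⟩, fun E => integral_nonneg fun x => (hpb x E).1⟩, ?_⟩
    intro ρ hρ hle
    apply hU ρ hρ
    intro y
    exact le_antisymm ((hsing0 y) ▸ hle {y}) (hρ.1.2 {y})
  refine ⟨⟨⟨⟨?_, ?_⟩, ?_⟩, by rw [mca, mpfa, hq]⟩, ⟨nuca_CA, mca⟩, ⟨nupfa_PFA, mpfa⟩, ?_⟩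
  · show (∫ x, Pca x (∅ : Set X) ∂μ) + (∫ x, Ppfa x (∅ : Set X) ∂μ) = 0
    rw [hcaE, hpfaE]; ring
  · intro A B hAB
    show (∫ x, Pca x (A ∪ B) ∂μ) + (∫ x, Ppfa x (A ∪ B) ∂μ) = _
    rw [hcaAdd A B hAB, hpfaAdd A B hAB]; ring
  · intro E
    exact add_nonneg (integral_nonneg fun x => (hcab x E).1)
      (integral_nonneg fun x => (hpb x E).1)
  · intro ρca ρpfa hρca hρpfa heq
    have hsing : ∀ y : X, ρca {y} = ∫ x, Pca x ({y} : Set X) ∂μ := by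
      intro y
      have h1 : ρpfa {y} = 0 := pfa_singleton hρpfa y
      have h2 := heq {y}
      rw [hsing0 y, h1] at h2
      linarith
    have h1 : ρca = fun E : Set X => ∫ x, Pca x E ∂μ :=
      ca_eq_of_singletons hU hρca nuca_CA hsing
    refine ⟨h1, funext fun E => ?_⟩
    have h2 := heq E
    have h3 : ρca E = ∫ x, Pca x E ∂μ := congrFun h1 E
    linarith
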